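/- arXiv:2112.12325 — 2 statements merged into one kernel-verified Lean document; each statement's English description precedes it below -/
import Mathlib

section
/- Let z : ℝ → EuclideanSpace ℝ (Fin 3) be differentiable with z(t) ≠ 0 for all t ≥ 0 and z'(t) = −Ω(t) ×₃ z(t) − v(t) for all t ≥ 0. Then the bearing y(t) := ‖z(t)‖⁻¹ • z(t) is differentiable at each t ≥ 0 with derivative y'(t) = −Ω(t) ×₃ y(t) − ‖z(t)‖⁻¹ • (v(t) − ⟪y(t), v(t)⟫ • y(t)); equivalently, ‖z(t)‖ • (y'(t) + Ω(t) ×₃ y(t)) = −(v(t) − ⟪y(t), v(t)⟫ • y(t)). -/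
/-!
Differentiating `y = ‖z‖⁻¹ • z` gives `‖z‖⁻¹` times the component of `z'` orthogonal to `y`.
Since `Ω ×₃ z` is already orthogonal to `z`, projecting `z' = -Ω ×₃ z - v` leaves the rotation
term intact, and `‖z‖⁻¹ • (Ω ×₃ z) = Ω ×₃ y`.
-/

open scoped RealInnerProductSpace

/-- Cross product on `EuclideanSpace ℝ (Fin 3)`, transported from Mathlib's
`crossProduct` on `Fin 3 → ℝ`. -/
noncomputable def cross3 (a b : EuclideanSpace ℝ (Fin 3)) : EuclideanSpace ℝ (Fin 3) :=
  (WithLp.equiv 2 (Fin 3 → ℝ)).symm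
    (crossProduct ((WithLp.equiv 2 (Fin 3 → ℝ)) a) ((WithLp.equiv 2 (Fin 3 → ℝ)) b))

section NormalizedCurve

variable {F : Type*} [NormedAddCommGroup F] [InnerProductSpace ℝ F] {f : ℝ → F} {f' : F} {x : ℝ}

theorem HasDerivAt.norm (hf : HasDerivAt f f' x) (h0 : f x ≠ 0) :
    HasDerivAt (‖f ·‖) (⟪f x, f'⟫ / ‖f x‖) x := by
  have hsq : ‖f x‖ ^ 2 ≠ 0 := by positivity
  have h := hf.norm_sq.sqrt hsq
  simp only [Real.sqrt_sq (norm_nonneg _)] at h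
  convert h using 1
  field_simp

theorem HasDerivAt.norm_inv_smul (hf : HasDerivAt f f' x) (h0 : f x ≠ 0) :
    HasDerivAt (fun s => ‖f s‖⁻¹ • f s)
      (‖f x‖⁻¹ • (f' - ⟪‖f x‖⁻¹ • f x, f'⟫ • (‖f x‖⁻¹ • f x))) x := by
  have hr : ‖f x‖ ≠ 0 := norm_ne_zero_iff.mpr h0
  refine (((hf.norm h0).inv hr).smul hf).congr_deriv ?_
  simp only [Pi.inv_apply, real_inner_smul_left]
  match_scalars <;> field_simp

end NormalizedCurve

theorem inner_cross3_self_right (a b : EuclideanSpace ℝ (Fin 3)) : ⟪b, cross3 a b⟫ = 0 := by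
  simpa [cross3, PiLp.inner_apply, dotProduct, mul_comm] using
    dot_cross_self (WithLp.equiv 2 (Fin 3 → ℝ) a) (WithLp.equiv 2 (Fin 3 → ℝ) b)

theorem cross3_smul_right (a b : EuclideanSpace ℝ (Fin 3)) (c : ℝ) :
    cross3 a (c • b) = c • cross3 a b := by
  simp [cross3]

theorem stmt2 (z Ω v : ℝ → EuclideanSpace ℝ (Fin 3))
    (hz : Differentiable ℝ z)
    (hz0 : ∀ t ≥ (0:ℝ), z t ≠ 0)
    (hzd : ∀ t ≥ (0:ℝ), deriv z t = -cross3 (Ω t) (z t) - v t)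
    (y : ℝ → EuclideanSpace ℝ (Fin 3)) (hy : y = fun t => ‖z t‖⁻¹ • z t) :
    ∀ t ≥ (0:ℝ),
      HasDerivAt y
        (-cross3 (Ω t) (y t) - ‖z t‖⁻¹ • (v t - ⟪y t, v t⟫ • y t)) t ∧
      ‖z t‖ • (deriv y t + cross3 (Ω t) (y t)) = -(v t - ⟪y t, v t⟫ • y t) := by
  intro t ht
  have hr : ‖z t‖ ≠ 0 := norm_ne_zero_iff.mpr (hz0 t ht)
  have hyt : y t = ‖z t‖⁻¹ • z t := by rw [hy]
  have hrot : ⟪y t, cross3 (Ω t) (z t)⟫ = 0 := by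
    rw [hyt, real_inner_smul_left, inner_cross3_self_right, mul_zero]
  have hderiv : HasDerivAt y
      (-cross3 (Ω t) (y t) - ‖z t‖⁻¹ • (v t - ⟪y t, v t⟫ • y t)) t := by
    have h := (hz t).hasDerivAt.norm_inv_smul (hz0 t ht)
    rw [← hy, ← hyt, hzd t ht, inner_sub_right, inner_neg_right, hrot] at h
    refine h.congr_deriv ?_
    rw [hyt, cross3_smul_right]
    module
  refine ⟨hderiv, ?_⟩
  rw [hderiv.deriv, smul_add, smul_sub, smul_neg, smul_smul, mul_inv_cancel₀ hr, one_smul]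
  abel
end

section
/- Let u : ℝ → ℝ be continuous with u(t) ≥ 0 for all t ≥ 0, and suppose there exist T > 0 and δ > 0 such that ∫_t^{t+T} u(s) ds ≥ δ for all t ≥ 0. Let γ > 0, and let ε : ℝ → EuclideanSpace ℝ (Fin n) be continuous with ‖ε(t)‖ ≤ a * Real.exp(−b t) for all t ≥ 0, for some a ≥ 0 and b > 0. If x : ℝ → EuclideanSpace ℝ (Fin n) is differentiable with x'(t) = −γ u(t) • x(t) + ε(t) for all t ≥ 0, then there exist M > 0 and λ > 0 such that ‖x(t)‖ ≤ M * Real.exp(−λ t) for all t ≥ 0; in particular x(t) → 0 as t → ∞. -/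
/-!
Multiplying by the integrating factor `exp (γ ∫₀ᵗ u)` gives the variation-of-constants bound
`‖x t‖ ≤ Φ(t,0) ‖x 0‖ + ∫₀ᵗ Φ(t,s) ‖ε s‖ ds` with `Φ(t,s) = exp (-γ ∫ₛᵗ u)`. Persistent excitation
puts `⌊(t - s)/T⌋` disjoint windows of mass at least `δ` inside `[s, t]`, so
`Φ(t,s) ≤ exp (γ δ) exp (-(γ δ / T)(t - s))`. Convolving this kernel with `a exp (-b s)` decays
like `exp (-λ t)` for every `λ < min (γ δ / T) b`.
-/

open Filter MeasureTheory Real intervalIntegral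

def PersistentlyExciting (u : ℝ → ℝ) (T δ : ℝ) : Prop :=
  ∀ t ≥ (0:ℝ), δ ≤ ∫ s in t..(t + T), u s

section PersistentExcitation

variable {u : ℝ → ℝ} {T δ : ℝ}

theorem nat_mul_le_integral_of_persistentlyExciting
    (hu : ∀ a b, IntervalIntegrable u volume a b)
    (hPE : PersistentlyExciting u T δ) (hT : 0 ≤ T) (k : ℕ) {s : ℝ} (hs : 0 ≤ s) :
    k * δ ≤ ∫ r in s..(s + k * T), u r := by
  induction k generalizing s with
  | zero => simp
  | succ k ih =>
    have hfirst := hPE s hs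
    have hrest := ih (s := s + T) (by linarith)
    rw [show s + ((k + 1 : ℕ) : ℝ) * T = s + T + k * T by push_cast; ring,
      ← integral_add_adjacent_intervals (hu _ _) (hu _ _)]
    push_cast
    linarith

theorem le_integral_of_persistentlyExciting
    (hu : ∀ a b, IntervalIntegrable u volume a b) (hu0 : ∀ t ≥ (0:ℝ), 0 ≤ u t)
    (hPE : PersistentlyExciting u T δ) (hT : 0 < T) (hδ : 0 ≤ δ)
    {s t : ℝ} (hs : 0 ≤ s) (hst : s ≤ t) :
    δ / T * (t - s) - δ ≤ ∫ r in s..t, u r := by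
  set k := ⌊(t - s) / T⌋₊
  have hkT : k * T ≤ t - s :=
    (le_div_iff₀ hT).1 (Nat.floor_le (div_nonneg (sub_nonneg.2 hst) hT.le))
  have hk : (t - s) / T ≤ k + 1 := (Nat.lt_floor_add_one _).le
  have hwindow : ∫ r in s..(s + k * T), u r ≤ ∫ r in s..t, u r :=
    integral_mono_interval le_rfl (le_add_of_nonneg_right (mul_nonneg k.cast_nonneg hT.le))
      (by linarith)
      ((ae_restrict_iff' measurableSet_Ioc).2 (ae_of_all _ fun r hr => hu0 r (hs.trans hr.1.le)))
      (hu s t)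
  have hwindows := nat_mul_le_integral_of_persistentlyExciting hu hPE hT.le k hs
  have hcount : δ / T * (t - s) ≤ δ * (k + 1) := by
    rw [div_mul_eq_mul_div, mul_div_assoc]
    exact mul_le_mul_of_nonneg_left hk hδ
  linarith

theorem exp_neg_integral_le_of_persistentlyExciting
    (hu : ∀ a b, IntervalIntegrable u volume a b) (hu0 : ∀ t ≥ (0:ℝ), 0 ≤ u t)
    (hPE : PersistentlyExciting u T δ) (hT : 0 < T) (hδ : 0 ≤ δ)
    {γ : ℝ} (hγ : 0 ≤ γ) {s t : ℝ} (hs : 0 ≤ s) (hst : s ≤ t) :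
    exp (-∫ r in s..t, γ * u r) ≤ exp (γ * δ) * exp (-(γ * δ / T) * (t - s)) := by
  rw [← exp_add, intervalIntegral.integral_const_mul]
  apply exp_le_exp.2
  have := mul_le_mul_of_nonneg_left
    (le_integral_of_persistentlyExciting hu hu0 hPE hT hδ hs hst) hγ
  linarith [show γ * (δ / T * (t - s) - δ) = γ * δ / T * (t - s) - γ * δ by ring]

end PersistentExcitation

section VariationOfConstants

variable {E : Type*} [NormedAddCommGroup E] [NormedSpace ℝ E] [CompleteSpace E]

theorem norm_le_of_hasDerivAt_neg_smul_add {g : ℝ → ℝ} {x ε : ℝ → E}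
    (hg : Continuous g) (hε : Continuous ε)
    (hx : ∀ t ≥ (0:ℝ), HasDerivAt x (-g t • x t + ε t) t) {t : ℝ} (ht : 0 ≤ t) :
    ‖x t‖ ≤ exp (-∫ r in (0:ℝ)..t, g r) * ‖x 0‖
      + ∫ s in (0:ℝ)..t, exp (-∫ r in s..t, g r) * ‖ε s‖ := by
  set G : ℝ → ℝ := fun t => ∫ r in (0:ℝ)..t, g r
  have hG : ∀ t, HasDerivAt G (g t) t := fun t => (hg.integral_hasStrictDerivAt 0 t).hasDerivAt
  have hGc : Continuous G := continuous_primitive (fun _ _ => hg.intervalIntegrable _ _) 0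
  have hGsub : ∀ s, ∫ r in s..t, g r = G t - G s := fun s =>
    (integral_interval_sub_left (hg.intervalIntegrable _ _) (hg.intervalIntegrable _ _)).symm
  have hderiv : ∀ s ∈ Set.uIcc 0 t,
      HasDerivAt (fun r => exp (G r) • x r) (exp (G s) • ε s) s := by
    intro s hs
    rw [Set.uIcc_of_le ht] at hs
    refine ((hG s).exp.smul (hx s hs.1)).congr_deriv ?_
    module
  have hFTC : exp (G t) • x t = x 0 + ∫ s in (0:ℝ)..t, exp (G s) • ε s := by
    rw [integral_eq_sub_of_hasDerivAt hderiv ((hGc.rexp.smul hε).intervalIntegrable _ _)]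
    simp [G]
  have hnorm : exp (G t) * ‖x t‖ ≤ ‖x 0‖ + ∫ s in (0:ℝ)..t, exp (G s) * ‖ε s‖ :=
    calc exp (G t) * ‖x t‖ = ‖exp (G t) • x t‖ := by rw [norm_smul, norm_of_nonneg (exp_pos _).le]
      _ ≤ ‖x 0‖ + ‖∫ s in (0:ℝ)..t, exp (G s) • ε s‖ := hFTC ▸ norm_add_le _ _
      _ ≤ ‖x 0‖ + ∫ s in (0:ℝ)..t, ‖exp (G s) • ε s‖ := by
        gcongr; exact norm_integral_le_integral_norm ht
      _ = ‖x 0‖ + ∫ s in (0:ℝ)..t, exp (G s) * ‖ε s‖ := by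
        simp only [norm_smul, norm_of_nonneg (exp_pos _).le]
  calc ‖x t‖ = exp (-G t) * (exp (G t) * ‖x t‖) := by rw [← mul_assoc, ← exp_add]; simp
    _ ≤ exp (-G t) * (‖x 0‖ + ∫ s in (0:ℝ)..t, exp (G s) * ‖ε s‖) := by gcongr
    _ = _ := by
      rw [mul_add, ← intervalIntegral.integral_const_mul]
      congr 1
      refine integral_congr fun s _ => ?_
      rw [hGsub, neg_sub, sub_eq_add_neg, exp_add]
      ring

end VariationOfConstants

theorem integral_exp_mul_exp_le {μ b lam t : ℝ} (hlamμ : lam ≤ μ) (hlamb : lam < b) (ht : 0 ≤ t) :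
    ∫ s in (0:ℝ)..t, exp (-μ * (t - s)) * exp (-b * s) ≤ exp (-lam * t) / (b - lam) := by
  have hc : 0 < b - lam := sub_pos.2 hlamb
  calc ∫ s in (0:ℝ)..t, exp (-μ * (t - s)) * exp (-b * s)
      ≤ ∫ s in (0:ℝ)..t, exp (-lam * t) * exp (-(b - lam) * s) := by
        refine integral_mono_on ht (Continuous.intervalIntegrable (by fun_prop) _ _)
          (Continuous.intervalIntegrable (by fun_prop) _ _) fun s hs => ?_
        rw [← exp_add, ← exp_add]
        exact exp_le_exp.2 (by nlinarith [hs.1, hs.2])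
    _ = exp (-lam * t) * ((1 - exp (-(b - lam) * t)) / (b - lam)) := by
        rw [intervalIntegral.integral_const_mul,
          integral_comp_mul_left (fun s => exp s) (by linarith), integral_exp, mul_zero, exp_zero,
          smul_eq_mul]
        field_simp
        ring
    _ ≤ exp (-lam * t) / (b - lam) := by
        rw [mul_div_assoc']
        gcongr
        exact mul_le_of_le_one_right (exp_pos _).le (by linarith [exp_pos (-(b - lam) * t)])

section ExponentialStability

variable {E : Type*} [NormedAddCommGroup E] [NormedSpace ℝ E] [CompleteSpace E]

theorem norm_le_mul_exp_of_transition_le {g : ℝ → ℝ} {x ε : ℝ → E}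
    (hg : Continuous g) (hε : Continuous ε)
    (hx : ∀ t ≥ (0:ℝ), HasDerivAt x (-g t • x t + ε t) t) {C μ a b lam : ℝ}
    (hC : 0 ≤ C) (ha : 0 ≤ a)
    (hΦ : ∀ s t : ℝ, 0 ≤ s → s ≤ t → exp (-∫ r in s..t, g r) ≤ C * exp (-μ * (t - s)))
    (hεbd : ∀ t ≥ (0:ℝ), ‖ε t‖ ≤ a * exp (-b * t)) (hlamμ : lam ≤ μ) (hlamb : lam < b)
    {t : ℝ} (ht : 0 ≤ t) :
    ‖x t‖ ≤ C * (‖x 0‖ + a / (b - lam)) * exp (-lam * t) := by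
  have hfree : exp (-∫ r in (0:ℝ)..t, g r) ≤ C * exp (-lam * t) :=
    (hΦ 0 t le_rfl ht).trans
      (mul_le_mul_of_nonneg_left (exp_le_exp.2 (by nlinarith)) hC)
  have hΦcont : Continuous fun s => exp (-∫ r in s..t, g r) := by
    simp only [integral_symm t, neg_neg]
    exact (continuous_primitive (fun _ _ => hg.intervalIntegrable _ _) t).rexp
  have hforced : ∫ s in (0:ℝ)..t, exp (-∫ r in s..t, g r) * ‖ε s‖
      ≤ C * a * (exp (-lam * t) / (b - lam)) :=
    calc ∫ s in (0:ℝ)..t, exp (-∫ r in s..t, g r) * ‖ε s‖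
        ≤ ∫ s in (0:ℝ)..t, C * a * (exp (-μ * (t - s)) * exp (-b * s)) := by
          refine integral_mono_on ht ((hΦcont.mul hε.norm).intervalIntegrable _ _)
            (Continuous.intervalIntegrable (by fun_prop) _ _) fun s hs => ?_
          calc exp (-∫ r in s..t, g r) * ‖ε s‖
              ≤ C * exp (-μ * (t - s)) * (a * exp (-b * s)) :=
                mul_le_mul (hΦ s t hs.1 hs.2) (hεbd s hs.1) (norm_nonneg _) (by positivity)
            _ = C * a * (exp (-μ * (t - s)) * exp (-b * s)) := by ring
      _ = C * a * ∫ s in (0:ℝ)..t, exp (-μ * (t - s)) * exp (-b * s) :=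
          intervalIntegral.integral_const_mul _ _
      _ ≤ C * a * (exp (-lam * t) / (b - lam)) := by
          gcongr
          exact integral_exp_mul_exp_le hlamμ hlamb ht
  calc ‖x t‖ ≤ exp (-∫ r in (0:ℝ)..t, g r) * ‖x 0‖
        + ∫ s in (0:ℝ)..t, exp (-∫ r in s..t, g r) * ‖ε s‖ :=
        norm_le_of_hasDerivAt_neg_smul_add hg hε hx ht
    _ ≤ C * exp (-lam * t) * ‖x 0‖ + C * a * (exp (-lam * t) / (b - lam)) := by gcongr
    _ = C * (‖x 0‖ + a / (b - lam)) * exp (-lam * t) := by ring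

end ExponentialStability

theorem tendsto_zero_of_norm_le_mul_exp {E : Type*} [NormedAddCommGroup E] {x : ℝ → E}
    {M lam : ℝ} (hlam : 0 < lam) (hx : ∀ t ≥ (0:ℝ), ‖x t‖ ≤ M * exp (-lam * t)) :
    Tendsto x atTop (nhds 0) := by
  have hdecay : Tendsto (fun t => M * exp (-lam * t)) atTop (nhds 0) := by
    simpa using (tendsto_exp_neg_atTop_nhds_zero.comp
      (tendsto_id.const_mul_atTop hlam)).const_mul M
  exact squeeze_zero_norm' (eventually_ge_atTop 0 |>.mono hx) hdecay

/-- A persistently excited scalar-gain LTV system perturbed by an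
exponentially decaying input still converges to zero exponentially
(Appendix A, proof of Proposition 2). -/
theorem stmt19 {n : ℕ} (u : ℝ → ℝ) (hu : Continuous u)
    (hu0 : ∀ t ≥ (0:ℝ), 0 ≤ u t)
    (T δ : ℝ) (hT : 0 < T) (hδ : 0 < δ)
    (hPE : ∀ t ≥ (0:ℝ), δ ≤ ∫ s in t..(t + T), u s)
    (γ : ℝ) (hγ : 0 < γ)
    (ε : ℝ → EuclideanSpace ℝ (Fin n)) (hε : Continuous ε)
    (a b : ℝ) (ha : 0 ≤ a) (hb : 0 < b)
    (hεbd : ∀ t ≥ (0:ℝ), ‖ε t‖ ≤ a * Real.exp (-b * t))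
    (x : ℝ → EuclideanSpace ℝ (Fin n)) (hx : Differentiable ℝ x)
    (hxd : ∀ t ≥ (0:ℝ), deriv x t = (-(γ * u t)) • x t + ε t) :
    (∃ M > (0:ℝ), ∃ lam > (0:ℝ),
      ∀ t ≥ (0:ℝ), ‖x t‖ ≤ M * Real.exp (-lam * t)) ∧
    Filter.Tendsto x Filter.atTop (nhds 0) := by
  obtain ⟨lam, hlam, hlamμb⟩ := exists_between (lt_min (by positivity : 0 < γ * δ / T) hb)
  obtain ⟨hlamμ, hlamb⟩ := lt_min_iff.1 hlamμb
  have hbound (t : ℝ) (ht : 0 ≤ t) :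
      ‖x t‖ ≤ exp (γ * δ) * (‖x 0‖ + a / (b - lam)) * exp (-lam * t) :=
    norm_le_mul_exp_of_transition_le (g := fun t => γ * u t) (by fun_prop) hε
      (fun t ht => hxd t ht ▸ (hx t).hasDerivAt) (exp_pos _).le ha
      (fun s t hs hst => exp_neg_integral_le_of_persistentlyExciting
        (fun _ _ => hu.intervalIntegrable _ _) hu0 hPE hT hδ.le hγ.le hs hst)
      hεbd hlamμ.le hlamb ht
  have hM : 0 ≤ exp (γ * δ) * (‖x 0‖ + a / (b - lam)) := by
    have : 0 < b - lam := sub_pos.2 hlamb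
    positivity
  have hdecay (t : ℝ) (ht : 0 ≤ t) :
      ‖x t‖ ≤ (exp (γ * δ) * (‖x 0‖ + a / (b - lam)) + 1) * exp (-lam * t) :=
    (hbound t ht).trans (by gcongr; linarith)
  exact ⟨⟨_, by positivity, lam, hlam, hdecay⟩, tendsto_zero_of_norm_le_mul_exp hlam hdecay⟩
end
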